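/- Let N ∈ ℕ, let p ∈ ℝ^N satisfy p_k > 0 for all k, and set F := {0, p} ⊆ ℓ1^N (a skew set with skew(F) = min_k p_k). Then for every r ∈ (0, skew(F)/2), mg(C̄_F(r)) = 2(1 + r)^N − 2 e^{−(‖p‖₁ − 2Nr)} / (1 + e^{−(‖p‖₁ − 2Nr)}), where ‖p‖₁ = Σ_k |p_k|; consequently lim_{r↘0} mg(C̄_F(r)) = 2/(1 + e^{−‖p‖₁}) = mg(F). -/

import Mathlib

open Metric Set Filter Topology
open scoped ENNReal Classical

/-- `ℓ1^N`: `ℝ^N` with the 1-metric. -/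
abbrev L1 (N : ℕ) := PiLp 1 fun _ : Fin N => ℝ

/-- The skewness of a set `S ⊆ ℝ^N`. -/
noncomputable def skewness {N : ℕ} (S : Set (L1 N)) : ℝ≥0∞ :=
  ⨅ (a : S) (b : S) (_ : a ≠ b) (k : Fin N), ENNReal.ofReal |a.1 k - b.1 k|

/-- A set is skew when its skewness is positive. -/
def IsSkew {N : ℕ} (S : Set (L1 N)) : Prop := 0 < skewness S

/-- The closed cube with center `p` and "radius" `r`. -/
def cube {N : ℕ} (p : L1 N) (r : ℝ) : Set (L1 N) :=
  {x | ∀ k, x k ∈ Set.Icc (p k - r) (p k + r)}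

/-- The union of cubes centered at the points of a finite set. -/
def cubes {N : ℕ} (F : Finset (L1 N)) (r : ℝ) : Set (L1 N) :=
  ⋃ p ∈ F, cube p r

/-- The magnitude of a finite subset `F` of a metric space. -/
noncomputable def finMag {X : Type*} [MetricSpace X] (F : Finset X) : ℝ :=
  sSup {m : ℝ | ∃ w : X → ℝ,
    (∀ p ∈ F, ∑ q ∈ F, Real.exp (-dist p q) * w q = 1) ∧ m = ∑ p ∈ F, w p}

/-- The magnitude of a compact subset: supremum of magnitudes of finite subsets. -/
noncomputable def cMag {X : Type*} [MetricSpace X] (K : Set X) : ℝ :=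
  sSup {m : ℝ | ∃ F : Finset X, ↑F ⊆ K ∧ m = finMag F}

/-!
The similarity kernel `exp (-d)` of `ℓ1^N` is positive semidefinite: it is a product of Laplace
kernels `exp (-|a - b|)`, each a Gram kernel in `L²(ℝ)`. Hence magnitude is monotone, and
`mg F ≤ ∑ w` whenever `F` lies in a finite set carrying a weighting `w`.

A finite subset of `ℝ` has a weighting of total `1 + ∑ tanh (gap / 2) ≤ 1 + length / 2`, and
products of these weight grids in `ℓ1^N`. Every path from the cube around `0` to the cube around
`p` runs through their facing corners, at distance `D = ‖p‖₁ - 2Nr`; weightings of two sets joined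
through such a bridge glue, losing exactly `2e^{-D} / (1 + e^{-D})`. Covering a finite subset of the
two cubes by two grids bounds its magnitude by `2(1 + r)^N - 2e^{-D} / (1 + e^{-D})`, and uniform
grids of mesh `2r/m` attain values converging to this bound.
-/

open Real MeasureTheory

section Weighting

variable {X : Type*} [MetricSpace X]

def IsWeighting (F : Finset X) (w : X → ℝ) : Prop :=
  ∀ p ∈ F, ∑ q ∈ F, exp (-dist p q) * w q = 1

noncomputable def simForm (G : Finset X) (u v : X → ℝ) : ℝ :=
  ∑ p ∈ G, ∑ q ∈ G, u p * v q * exp (-dist p q)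

lemma simForm_comm (G : Finset X) (u v : X → ℝ) : simForm G u v = simForm G v u := by
  rw [simForm, simForm, Finset.sum_comm]
  exact Finset.sum_congr rfl fun p _ => Finset.sum_congr rfl fun q _ => by rw [dist_comm]; ring

lemma simForm_sub_sub (G : Finset X) (u v : X → ℝ) :
    simForm G (u - v) (u - v) = simForm G u u - 2 * simForm G v u + simForm G v v := by
  have : simForm G (u - v) (u - v) =
      simForm G u u - simForm G u v - simForm G v u + simForm G v v := by
    simp only [simForm, ← Finset.sum_sub_distrib, ← Finset.sum_add_distrib, Pi.sub_apply]
    exact Finset.sum_congr rfl fun p _ => Finset.sum_congr rfl fun q _ => by ring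
  rw [this, simForm_comm G u v]
  ring

lemma simForm_eq_sum_of_isWeighting {G : Finset X} {u w : X → ℝ}
    (hw : ∀ p ∈ G, u p ≠ 0 → ∑ q ∈ G, exp (-dist p q) * w q = 1) :
    simForm G u w = ∑ p ∈ G, u p := by
  refine Finset.sum_congr rfl fun p hp => ?_
  by_cases hup : u p = 0
  · simp [hup]
  · simp_rw [mul_assoc, ← Finset.mul_sum, mul_comm (w _), hw p hp hup, mul_one]

lemma IsWeighting.sum_eq {F : Finset X} {w w' : X → ℝ} (hw : IsWeighting F w)
    (hw' : IsWeighting F w') : ∑ p ∈ F, w p = ∑ p ∈ F, w' p := by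
  rw [← simForm_eq_sum_of_isWeighting fun p hp _ => hw' p hp, simForm_comm,
    simForm_eq_sum_of_isWeighting fun p hp _ => hw p hp]

lemma finMag_eq_sSup (F : Finset X) :
    finMag F = sSup {m : ℝ | ∃ w, IsWeighting F w ∧ m = ∑ p ∈ F, w p} :=
  rfl

lemma finMag_eq_sum {F : Finset X} {w : X → ℝ} (hw : IsWeighting F w) :
    finMag F = ∑ p ∈ F, w p := by
  have : {m : ℝ | ∃ w', IsWeighting F w' ∧ m = ∑ p ∈ F, w' p} = {∑ p ∈ F, w p} := by
    ext m
    exact ⟨fun ⟨w', hw', hm⟩ => hm.trans (hw'.sum_eq hw), fun hm => ⟨w, hw, hm⟩⟩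
  rw [finMag_eq_sSup, this, csSup_singleton]

lemma isWeighting_singleton (x : X) : IsWeighting {x} fun _ => 1 := by
  simp [IsWeighting]

lemma finMag_empty : finMag (∅ : Finset X) = 0 := by
  rw [finMag_eq_sum (w := 0) fun p hp => absurd hp (Finset.notMem_empty p), Finset.sum_empty]

lemma finMag_singleton (x : X) : finMag {x} = 1 := by
  simp [finMag_eq_sum (isWeighting_singleton x)]

lemma finMag_pair [DecidableEq X] (x y : X) : finMag {x, y} = 2 / (1 + exp (-dist x y)) := by
  obtain rfl | hxy := eq_or_ne x y
  · norm_num [finMag_singleton]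
  have hw : IsWeighting {x, y} fun _ => 1 / (1 + exp (-dist x y)) := by
    have : 1 + exp (-dist x y) ≠ 0 := by positivity
    simp only [IsWeighting, Finset.mem_insert, Finset.mem_singleton, Finset.sum_pair hxy]
    rintro p (rfl | rfl) <;> field_simp <;> simp [dist_comm, add_comm]
  rw [finMag_eq_sum hw, Finset.sum_pair hxy]
  ring

/-- Expand `0 ≤ simForm G (w - v) (w - v)`, where `v` is a weighting of `F` extended by zero. -/
lemma finMag_le_sum_of_isWeighting {F G : Finset X} {w : X → ℝ}
    (hpsd : ∀ c : X → ℝ, 0 ≤ simForm G c c) (hFG : F ⊆ G) (hw : IsWeighting G w) :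
    finMag F ≤ ∑ p ∈ G, w p := by
  have hwsum : simForm G w w = ∑ p ∈ G, w p :=
    simForm_eq_sum_of_isWeighting fun p hp _ => hw p hp
  by_cases hF : ∃ v, IsWeighting F v
  swap
  · have : {m : ℝ | ∃ v, IsWeighting F v ∧ m = ∑ p ∈ F, v p} = ∅ :=
      Set.eq_empty_of_forall_notMem fun m ⟨v, hv, _⟩ => hF ⟨v, hv⟩
    rw [finMag_eq_sSup, this, Real.sSup_empty, ← hwsum]
    exact hpsd w
  obtain ⟨v, hv⟩ := hF
  set v' := (F : Set X).indicator v
  have hv'sum : ∑ p ∈ G, v' p = ∑ p ∈ F, v p := Finset.sum_indicator_subset v hFG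
  have hv' : ∀ p ∈ G, v' p ≠ 0 → ∑ q ∈ G, exp (-dist p q) * v' q = 1 := by
    intro p _ hp
    have := Finset.sum_indicator_subset (fun q => exp (-dist p q) * v q) hFG
    simp only [indicator_mul_right] at this
    rw [this]
    exact hv p (Finset.mem_coe.1 (Set.mem_of_indicator_ne_zero hp))
  have := hpsd (w - v')
  rw [simForm_sub_sub, hwsum, simForm_eq_sum_of_isWeighting fun p hp _ => hw p hp,
    simForm_eq_sum_of_isWeighting hv', hv'sum] at this
  rw [finMag_eq_sum hv]
  linarith

end Weighting

noncomputable def bridgeLoss (D : ℝ) : ℝ := 2 * exp (-D) / (1 + exp (-D))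

lemma two_sub_bridgeLoss (D : ℝ) : 2 - bridgeLoss D = 2 / (1 + exp (-D)) := by
  have : 0 < 1 + exp (-D) := by positivity
  rw [bridgeLoss]
  field_simp
  ring

lemma continuous_bridgeLoss : Continuous bridgeLoss := by
  unfold bridgeLoss
  fun_prop (disch := intro; positivity)

section Bridge

variable {X : Type*} [MetricSpace X] [DecidableEq X] {A B : Finset X} {a b : X}
  {wA wB w : X → ℝ} {t : ℝ}

lemma IsWeighting.sum_exp_mul_sub_single (hwA : IsWeighting A wA) (ha : a ∈ A) {y : X}
    (hy : y ∈ A) (hw : ∀ q ∈ A, w q = wA q - if q = a then t else 0) :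
    ∑ q ∈ A, exp (-dist y q) * w q = 1 - exp (-dist y a) * t := by
  rw [Finset.sum_congr rfl fun q hq => by rw [hw q hq, mul_sub, mul_ite, mul_zero],
    Finset.sum_sub_distrib, hwA y hy, Finset.sum_ite_eq' A a, if_pos ha]

variable (hdisj : Disjoint A B) (ha : a ∈ A) (hb : b ∈ B)
  (hsplit : ∀ x ∈ A, ∀ y ∈ B, dist x y = dist x a + dist a b + dist b y)
  (hwA : IsWeighting A wA) (hwB : IsWeighting B wB)
include hdisj ha hb hsplit hwA hwB

lemma sum_exp_mul_bridge (ht : t = exp (-dist a b) / (1 + exp (-dist a b)))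
    (hwa : ∀ q ∈ A, w q = wA q - if q = a then t else 0)
    (hwb : ∀ q ∈ B, w q = wB q - if q = b then t else 0) {x : X} (hx : x ∈ A) :
    ∑ q ∈ A ∪ B, exp (-dist x q) * w q = 1 := by
  set E := exp (-dist a b)
  have hfactor : ∀ q ∈ B, exp (-dist x q) = exp (-dist x a) * E * exp (-dist b q) := by
    intro q hq
    rw [hsplit x hx q hq, ← exp_add, ← exp_add]
    ring_nf
  have hB : ∑ q ∈ B, exp (-dist x q) * w q = exp (-dist x a) * E * (1 - t) := by
    rw [Finset.sum_congr rfl fun q hq => by rw [hfactor q hq, mul_assoc], ← Finset.mul_sum,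
      hwB.sum_exp_mul_sub_single hb hb hwb, dist_self, neg_zero, exp_zero, one_mul]
  have hE : E * (1 - t) = t := by
    have : 0 < 1 + E := by positivity
    rw [ht]
    field_simp
    ring
  rw [Finset.sum_union hdisj, hwA.sum_exp_mul_sub_single ha hx hwa, hB, mul_assoc, hE]
  ring

/-- The glued weighting lowers the weights of `a` and `b` by `t = E / (1 + E)`, `E = e^{-d(a, b)}`,
the solution of `E (1 - t) = t`. -/
lemma IsWeighting.exists_union_of_bridge :
    ∃ w, IsWeighting (A ∪ B) w ∧ ∑ q ∈ A ∪ B, w q =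
      ∑ q ∈ A, wA q + ∑ q ∈ B, wB q - bridgeLoss (dist a b) := by
  set t := exp (-dist a b) / (1 + exp (-dist a b)) with ht
  set w : X → ℝ := fun q =>
    if q ∈ A then wA q - (if q = a then t else 0) else wB q - if q = b then t else 0
  have hwa : ∀ q ∈ A, w q = wA q - if q = a then t else 0 := fun q hq => if_pos hq
  have hwb : ∀ q ∈ B, w q = wB q - if q = b then t else 0 := fun q hq =>
    if_neg (Finset.disjoint_right.1 hdisj hq)
  refine ⟨w, fun x hx => ?_, ?_⟩
  · rcases Finset.mem_union.1 hx with hx | hx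
    · exact sum_exp_mul_bridge hdisj ha hb hsplit hwA hwB ht hwa hwb hx
    · rw [Finset.union_comm]
      refine sum_exp_mul_bridge hdisj.symm hb ha (fun x hx y hy => ?_) hwB hwA
        (by rw [dist_comm]) hwb hwa hx
      rw [dist_comm, hsplit y hy x hx]
      linarith [dist_comm x b, dist_comm a b, dist_comm a y]
  · rw [Finset.sum_union hdisj, Finset.sum_congr rfl hwa, Finset.sum_congr rfl hwb,
      Finset.sum_sub_distrib, Finset.sum_sub_distrib, Finset.sum_ite_eq' A a,
      Finset.sum_ite_eq' B b, if_pos ha, if_pos hb, bridgeLoss]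
    ring

end Bridge

noncomputable def halfLineExp (a : ℝ) : ℝ → ℝ :=
  (Iic (2 * a)).indicator fun u => exp (u / 2 - a)

lemma halfLineExp_mul (a b u : ℝ) :
    halfLineExp a u * halfLineExp b u =
      exp (-a - b) * (Iic (2 * min a b)).indicator exp u := by
  rw [mul_min_of_nonneg _ _ zero_le_two]
  simp only [halfLineExp, indicator, mem_Iic, le_min_iff]
  split_ifs <;> simp only [mul_zero, zero_mul, ← exp_add] <;> first | tauto | ring_nf

lemma integrable_halfLineExp_mul (a b : ℝ) :
    Integrable fun u => halfLineExp a u * halfLineExp b u := by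
  simp_rw [halfLineExp_mul]
  exact ((integrable_indicator_iff measurableSet_Iic).2 (integrableOn_exp_Iic _)).const_mul _

lemma integral_halfLineExp_mul (a b : ℝ) :
    ∫ u, halfLineExp a u * halfLineExp b u = exp (-|a - b|) := by
  simp_rw [halfLineExp_mul]
  rw [integral_const_mul, integral_indicator measurableSet_Iic, integral_exp_Iic, ← exp_add]
  congr 1
  rcases le_total a b with h | h
  · rw [min_eq_left h, abs_of_nonpos (by linarith)]; ring
  · rw [min_eq_right h, abs_of_nonneg (by linarith)]; ring

/-- Since `exp (-|a - b|) = ∫ halfLineExp a * halfLineExp b`, the form in dimension `N + 1` is an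
integral of forms in dimension `N`. -/
lemma sum_sum_mul_exp_neg_sum_abs_nonneg {ι : Type*} (N : ℕ) (I : Finset ι)
    (x : ι → Fin N → ℝ) (c : ι → ℝ) :
    0 ≤ ∑ i ∈ I, ∑ j ∈ I, c i * c j * exp (-∑ k, |x i k - x j k|) := by
  induction N generalizing c with
  | zero => simpa [← Finset.sum_mul_sum] using mul_self_nonneg (∑ i ∈ I, c i)
  | succ n ih =>
    set F : ι → ι → ℝ → ℝ := fun i j u => (c i * halfLineExp (x i 0) u) *
      (c j * halfLineExp (x j 0) u) * exp (-∑ k : Fin n, |x i k.succ - x j k.succ|)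
    have hF : ∀ i j, c i * c j * exp (-∑ k, |x i k - x j k|) = ∫ u, F i j u := by
      intro i j
      rw [Fin.sum_univ_succ, neg_add, exp_add, ← integral_halfLineExp_mul, ← integral_mul_const,
        ← integral_const_mul]
      congr 1 with u
      ring
    have hint : ∀ i j, Integrable (F i j) := fun i j =>
      ((integrable_halfLineExp_mul (x i 0) (x j 0)).const_mul
        (c i * c j * exp (-∑ k : Fin n, |x i k.succ - x j k.succ|))).congr
        (.of_forall fun u => by simp only [F]; ring)
    calc 0 ≤ ∫ u, ∑ i ∈ I, ∑ j ∈ I, F i j u :=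
          integral_nonneg fun u => ih (fun i k => x i k.succ) (fun i => c i * halfLineExp (x i 0) u)
      _ = _ := by
        rw [integral_finsetSum _ fun i _ => integrable_finsetSum _ fun j _ => hint i j]
        simp_rw [integral_finsetSum _ fun j _ => hint _ j, hF]

namespace L1

variable {N : ℕ}

lemma dist_eq (x y : L1 N) : dist x y = ∑ k, |x k - y k| := by
  rw [PiLp.dist_eq_sum (by simp : 0 < (1 : ℝ≥0∞).toReal)]
  simp [Real.dist_eq]

lemma dist_zero_left (p : L1 N) : dist 0 p = ∑ k, |p k| := by
  simp [dist_eq]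

lemma simForm_nonneg (G : Finset (L1 N)) (c : L1 N → ℝ) : 0 ≤ simForm G c c := by
  simpa [simForm, dist_eq] using sum_sum_mul_exp_neg_sum_abs_nonneg N G (fun x k => x k) c

lemma dist_eq_add_of_le {x a b y : L1 N} (hxa : ∀ k, x k ≤ a k) (hab : ∀ k, a k ≤ b k)
    (hby : ∀ k, b k ≤ y k) : dist x y = dist x a + dist a b + dist b y := by
  simp only [dist_eq, ← Finset.sum_add_distrib]
  refine Finset.sum_congr rfl fun k _ => ?_
  rw [abs_of_nonpos (by linarith [hxa k, hab k, hby k]), abs_of_nonpos (sub_nonpos.2 (hxa k)),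
    abs_of_nonpos (sub_nonpos.2 (hab k)), abs_of_nonpos (sub_nonpos.2 (hby k))]
  ring

noncomputable def grid (S : Fin N → Finset ℝ) : Finset (L1 N) :=
  (Fintype.piFinset S).map ⟨WithLp.toLp 1, WithLp.toLp_injective 1⟩

lemma mem_grid {S : Fin N → Finset ℝ} {x : L1 N} : x ∈ grid S ↔ ∀ k, x k ∈ S k := by
  simp [grid]

lemma sum_grid_prod (S : Fin N → Finset ℝ) (f : Fin N → ℝ → ℝ) :
    ∑ y ∈ grid S, ∏ k, f k (y k) = ∏ k, ∑ b ∈ S k, f k b := by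
  rw [grid, Finset.sum_map, Finset.prod_univ_sum]
  rfl

lemma isWeighting_grid {S : Fin N → Finset ℝ} {w : Fin N → ℝ → ℝ}
    (hw : ∀ k, IsWeighting (S k) (w k)) : IsWeighting (grid S) fun y => ∏ k, w k (y k) := by
  intro x hx
  have hprod : ∀ y : L1 N, exp (-dist x y) * ∏ k, w k (y k) =
      ∏ k, exp (-dist (x k) (y k)) * w k (y k) := fun y => by
    rw [Finset.prod_mul_distrib, ← exp_sum, dist_eq, ← Finset.sum_neg_distrib]
    simp only [Real.dist_eq]
  simp_rw [hprod]
  exact (sum_grid_prod S fun k b => exp (-dist (x k) b) * w k b).trans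
    (Finset.prod_eq_one fun k _ => hw k (x k) (mem_grid.1 hx k))

lemma grid_subset_cube {S : Fin N → Finset ℝ} {c : L1 N} {r : ℝ}
    (hS : ∀ k, ∀ x ∈ S k, x ∈ Icc (c k - r) (c k + r)) : ↑(grid S) ⊆ cube c r :=
  fun _ hx k => hS k _ (mem_grid.1 hx k)

end L1

/-- `tanhHalf g = tanh (g / 2)`. -/
noncomputable def tanhHalf (g : ℝ) : ℝ := (1 - exp (-g)) / (1 + exp (-g))

lemma tanhHalf_nonneg {g : ℝ} (hg : 0 ≤ g) : 0 ≤ tanhHalf g :=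
  div_nonneg (by simpa using hg) (by positivity)

lemma tanhHalf_le_half {g : ℝ} (hg : 0 ≤ g) : tanhHalf g ≤ g / 2 := by
  set f : ℝ → ℝ := fun g => g * (1 + exp (-g)) - 2 * (1 - exp (-g))
  have hf : ∀ x, HasDerivAt f (1 - (1 + x) * exp (-x)) x := fun x => by
    have hexp : HasDerivAt (fun g => exp (-g)) (-exp (-x)) x := by
      simpa using (hasDerivAt_neg x).exp
    refine (((hasDerivAt_id x).mul (hexp.const_add 1)).sub
      ((hexp.const_sub 1).const_mul 2)).congr_deriv ?_
    simp only [id]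
    ring
  have hmono : Monotone f := monotone_of_deriv_nonneg (fun x => (hf x).differentiableAt)
    fun x => by
      have := mul_le_mul_of_nonneg_right (add_one_le_exp x) (exp_pos (-x)).le
      rw [← exp_add, add_neg_cancel, exp_zero, add_comm] at this
      rw [(hf x).deriv]
      linarith
  have := hmono hg
  simp only [f, neg_zero, exp_zero] at this
  rw [tanhHalf, div_le_iff₀ (by positivity)]
  linarith

lemma half_sub_sq_le_tanhHalf {g : ℝ} (hg₀ : 0 ≤ g) (hg₁ : g ≤ 1) :
    (g - g ^ 2) / 2 ≤ tanhHalf g := by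
  have h := abs_exp_sub_one_sub_id_le (x := -g) (by rwa [abs_neg, abs_of_nonneg hg₀])
  have hE : exp (-g) ≤ 1 := by simpa using hg₀
  rw [tanhHalf, le_div_iff₀ (by positivity)]
  nlinarith [abs_le.1 h, exp_pos (-g)]

lemma IsWeighting.exists_insert_of_lt {A : Finset ℝ} {w : ℝ → ℝ} (hw : IsWeighting A w)
    {c a : ℝ} (hc : c ∈ A) (hcA : ∀ x ∈ A, x ≤ c) (hca : c < a) :
    ∃ w', IsWeighting (insert a A) w' ∧
      ∑ q ∈ insert a A, w' q = ∑ q ∈ A, w q + tanhHalf (a - c) := by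
  have hdisj : Disjoint A {a} :=
    Finset.disjoint_singleton_right.2 fun ha => (hca.trans_le (hcA a ha)).false
  have hsplit : ∀ x ∈ A, ∀ y ∈ ({a} : Finset ℝ), dist x y = dist x c + dist c a + dist a y := by
    intro x hx y hy
    rw [Finset.mem_singleton.1 hy, dist_self, Real.dist_eq, Real.dist_eq, Real.dist_eq,
      abs_of_nonpos (by linarith [hcA x hx]), abs_of_nonpos (by linarith [hcA x hx]),
      abs_of_nonpos (sub_nonpos.2 hca.le)]
    ring
  obtain ⟨w', hw', hsum⟩ :=
    hw.exists_union_of_bridge hdisj hc (Finset.mem_singleton_self a) hsplit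
      (isWeighting_singleton a)
  rw [Finset.union_comm, ← Finset.insert_eq] at hw' hsum
  refine ⟨w', hw', ?_⟩
  have : 0 < 1 + exp (-(a - c)) := by positivity
  rw [hsum, Real.dist_eq, abs_of_neg (sub_neg.2 hca), neg_sub, tanhHalf, bridgeLoss,
    Finset.sum_singleton]
  field_simp
  ring

lemma exists_isWeighting_real (A : Finset ℝ) (hA : A.Nonempty) :
    ∃ w, IsWeighting A w ∧ 1 ≤ ∑ q ∈ A, w q ∧
      ∀ lo hi, (∀ x ∈ A, x ∈ Icc lo hi) → ∑ q ∈ A, w q ≤ 1 + (hi - lo) / 2 := by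
  induction A using Finset.induction_on_max with
  | empty => exact absurd hA Finset.not_nonempty_empty
  | insert a s hlt ih =>
    obtain rfl | hs := s.eq_empty_or_nonempty
    · refine ⟨_, isWeighting_singleton a, by simp, fun lo hi h => ?_⟩
      have := h a (Finset.mem_insert_self a ∅)
      simp only [Finset.sum_const, Finset.card_singleton, one_smul, insert_empty_eq]
      linarith [this.1, this.2]
    obtain ⟨w, hw, hw1, hwle⟩ := ih hs
    set c := s.max' hs
    obtain ⟨w', hw', hsum⟩ := hw.exists_insert_of_lt (s.max'_mem hs) (fun x hx => s.le_max' x hx)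
      (hlt c (s.max'_mem hs))
    have hth := tanhHalf_nonneg (sub_nonneg.2 (hlt c (s.max'_mem hs)).le)
    refine ⟨w', hw', by linarith, fun lo hi h => ?_⟩
    have hs' := hwle lo c fun x hx =>
      ⟨(h x (Finset.mem_insert_of_mem hx)).1, s.le_max' x hx⟩
    have := tanhHalf_le_half (sub_nonneg.2 (hlt c (s.max'_mem hs)).le)
    linarith [(h a (Finset.mem_insert_self a s)).2]

noncomputable def arithProg (lo g : ℝ) (n : ℕ) : Finset ℝ :=
  (Finset.range (n + 1)).image fun j : ℕ => lo + j * g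

lemma mem_arithProg {lo g x : ℝ} {n : ℕ} : x ∈ arithProg lo g n ↔ ∃ j ≤ n, lo + j * g = x := by
  simp [arithProg]

lemma exists_isWeighting_arithProg (lo : ℝ) {g : ℝ} (hg : 0 < g) (n : ℕ) :
    ∃ w, IsWeighting (arithProg lo g n) w ∧ ∑ q ∈ arithProg lo g n, w q = 1 + n * tanhHalf g := by
  induction n with
  | zero => simpa [arithProg] using ⟨_, isWeighting_singleton lo, rfl⟩
  | succ n ih =>
    obtain ⟨w, hw, hsum⟩ := ih
    have hmax : ∀ x ∈ arithProg lo g n, x ≤ lo + n * g := by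
      simp only [mem_arithProg, forall_exists_index, and_imp]
      rintro _ j hj rfl
      gcongr
    obtain ⟨w', hw', hsum'⟩ := hw.exists_insert_of_lt
      (mem_arithProg.2 ⟨n, le_rfl, rfl⟩) hmax
      (show lo + n * g < lo + ↑(n + 1) * g by push_cast; linarith)
    rw [arithProg, Finset.range_add_one, Finset.image_insert, ← arithProg]
    refine ⟨w', hw', ?_⟩
    rw [hsum', hsum, show lo + ↑(n + 1) * g - (lo + n * g) = g by push_cast; ring]
    push_cast
    ring

lemma arithProg_subset_Icc {lo g : ℝ} (hg : 0 ≤ g) {n : ℕ} :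
    ∀ x ∈ arithProg lo g n, x ∈ Icc lo (lo + n * g) := by
  simp only [mem_arithProg, forall_exists_index, and_imp]
  rintro _ j hj rfl
  have : (j : ℝ) * g ≤ n * g := by gcongr
  constructor <;> nlinarith [mul_nonneg (Nat.cast_nonneg j) hg]

lemma tendsto_nat_mul_tanhHalf {r : ℝ} (hr : 0 ≤ r) :
    Tendsto (fun m : ℕ => m * tanhHalf (2 * r / m)) atTop (𝓝 r) := by
  have hlow : Tendsto (fun m : ℕ => r - 2 * r ^ 2 / m) atTop (𝓝 r) := by
    simpa using (tendsto_const_nhds (x := r)).sub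
      (tendsto_const_div_atTop_nhds_zero_nat (2 * r ^ 2))
  refine tendsto_of_tendsto_of_tendsto_of_le_of_le' hlow tendsto_const_nhds ?_ ?_
  · filter_upwards [eventually_ge_atTop ⌈2 * r⌉₊, eventually_gt_atTop 0] with m hm hm₀
    have hm' : (0 : ℝ) < m := by exact_mod_cast hm₀
    have hg : 2 * r / m ≤ 1 := (div_le_one hm').2 ((Nat.le_ceil _).trans (by exact_mod_cast hm))
    calc r - 2 * r ^ 2 / m = m * ((2 * r / m - (2 * r / m) ^ 2) / 2) := by field_simp
      _ ≤ m * tanhHalf (2 * r / m) := by gcongr; exact half_sub_sq_le_tanhHalf (by positivity) hg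
  · filter_upwards [eventually_gt_atTop 0] with m hm₀
    have hm' : (0 : ℝ) < m := by exact_mod_cast hm₀
    calc m * tanhHalf (2 * r / m) ≤ m * (2 * r / m / 2) := by
          gcongr; exact tanhHalf_le_half (by positivity)
      _ = r := by field_simp

section TwoCubes

open L1

variable {N : ℕ} {c d : L1 N} {r : ℝ}

lemma dist_corners (hr : 0 ≤ r) (hcd : ∀ k, c k + 2 * r < d k) :
    dist (WithLp.toLp 1 fun k => c k + r : L1 N) (WithLp.toLp 1 fun k => d k - r) =
      dist c d - 2 * N * r := by
  have h : ∀ k, |c k + r - (d k - r)| = |c k - d k| - 2 * r := fun k => by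
    rw [abs_of_neg (by linarith [hcd k]), abs_of_neg (by linarith [hcd k])]
    ring
  simp only [L1.dist_eq, h, Finset.sum_sub_distrib, Finset.sum_const, Finset.card_univ,
    Fintype.card_fin, nsmul_eq_mul]
  ring

lemma exists_isWeighting_grid_union_grid (hN : 0 < N) (hr : 0 ≤ r) (hcd : ∀ k, c k + 2 * r < d k)
    {SA SB : Fin N → Finset ℝ} (hSA : ∀ k, ∀ x ∈ SA k, x ∈ Icc (c k - r) (c k + r))
    (hcSA : ∀ k, c k + r ∈ SA k) (hSB : ∀ k, ∀ x ∈ SB k, x ∈ Icc (d k - r) (d k + r))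
    (hdSB : ∀ k, d k - r ∈ SB k) {wA wB : Fin N → ℝ → ℝ}
    (hwA : ∀ k, IsWeighting (SA k) (wA k)) (hwB : ∀ k, IsWeighting (SB k) (wB k)) :
    ∃ w, IsWeighting (grid SA ∪ grid SB) w ∧ ∑ q ∈ grid SA ∪ grid SB, w q =
      ∏ k, ∑ b ∈ SA k, wA k b + ∏ k, ∑ b ∈ SB k, wB k b - bridgeLoss (dist c d - 2 * N * r) := by
  set a : L1 N := WithLp.toLp 1 fun k => c k + r
  set b : L1 N := WithLp.toLp 1 fun k => d k - r
  have hdisj : Disjoint (grid SA) (grid SB) := by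
    refine Finset.disjoint_left.2 fun x hxA hxB => ?_
    have h₁ := hSA ⟨0, hN⟩ _ (mem_grid.1 hxA _)
    have h₂ := hSB ⟨0, hN⟩ _ (mem_grid.1 hxB _)
    linarith [h₁.2, h₂.1, hcd ⟨0, hN⟩]
  have hsplit : ∀ x ∈ grid SA, ∀ y ∈ grid SB, dist x y = dist x a + dist a b + dist b y :=
    fun x hx y hy => dist_eq_add_of_le (fun k => (hSA k _ (mem_grid.1 hx k)).2)
      (fun k => by simp only [a, b]; linarith [hcd k]) fun k => (hSB k _ (mem_grid.1 hy k)).1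
  obtain ⟨w, hw, hsum⟩ := (isWeighting_grid hwA).exists_union_of_bridge hdisj
    (mem_grid.2 hcSA) (mem_grid.2 hdSB) hsplit (isWeighting_grid hwB)
  refine ⟨w, hw, ?_⟩
  rw [hsum, sum_grid_prod, sum_grid_prod, dist_corners hr hcd]

lemma prod_le_one_add_pow {S : Fin N → Finset ℝ} {w : Fin N → ℝ → ℝ}
    (h₁ : ∀ k, 1 ≤ ∑ b ∈ S k, w k b) (h₂ : ∀ k, ∑ b ∈ S k, w k b ≤ 1 + r) :
    ∏ k, ∑ b ∈ S k, w k b ≤ (1 + r) ^ N := by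
  calc ∏ k, ∑ b ∈ S k, w k b ≤ ∏ _k : Fin N, (1 + r) :=
        Finset.prod_le_prod (fun k _ => by linarith [h₁ k]) fun k _ => h₂ k
    _ = (1 + r) ^ N := by simp

lemma finMag_le_of_subset_cube_union (hN : 0 < N) (hr : 0 ≤ r) (hcd : ∀ k, c k + 2 * r < d k)
    {F : Finset (L1 N)} (hF : ↑F ⊆ cube c r ∪ cube d r) :
    finMag F ≤ 2 * (1 + r) ^ N - bridgeLoss (dist c d - 2 * N * r) := by
  set SA : Fin N → Finset ℝ := fun k => insert (c k + r) ((F.filter (· ∈ cube c r)).image (· k))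
  set SB : Fin N → Finset ℝ := fun k => insert (d k - r) ((F.filter (· ∉ cube c r)).image (· k))
  have hSA : ∀ k, ∀ x ∈ SA k, x ∈ Icc (c k - r) (c k + r) := by
    simp only [SA, Finset.mem_insert, Finset.mem_image, Finset.mem_filter]
    rintro k _ (rfl | ⟨y, ⟨-, hy⟩, rfl⟩)
    · constructor <;> linarith
    · exact hy k
  have hSB : ∀ k, ∀ x ∈ SB k, x ∈ Icc (d k - r) (d k + r) := by
    simp only [SB, Finset.mem_insert, Finset.mem_image, Finset.mem_filter]
    rintro k _ (rfl | ⟨y, ⟨hyF, hy⟩, rfl⟩)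
    · constructor <;> linarith
    · exact ((hF hyF).resolve_left hy) k
  choose wA hwA hwA₁ hwA₂ using fun k => exists_isWeighting_real (SA k) (Finset.insert_nonempty _ _)
  choose wB hwB hwB₁ hwB₂ using fun k => exists_isWeighting_real (SB k) (Finset.insert_nonempty _ _)
  obtain ⟨w, hw, hsum⟩ := exists_isWeighting_grid_union_grid hN hr hcd hSA
    (fun k => Finset.mem_insert_self _ _) hSB (fun k => Finset.mem_insert_self _ _) hwA hwB
  have hFG : F ⊆ grid SA ∪ grid SB := by
    intro x hx
    by_cases hxc : x ∈ cube c r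
    · exact Finset.mem_union_left _ <| mem_grid.2 fun k =>
        Finset.mem_insert_of_mem (Finset.mem_image_of_mem _ (Finset.mem_filter.2 ⟨hx, hxc⟩))
    · exact Finset.mem_union_right _ <| mem_grid.2 fun k =>
        Finset.mem_insert_of_mem (Finset.mem_image_of_mem _ (Finset.mem_filter.2 ⟨hx, hxc⟩))
  have hA := prod_le_one_add_pow hwA₁ fun k => (hwA₂ k _ _ (hSA k)).trans_eq (by ring)
  have hB := prod_le_one_add_pow hwB₁ fun k => (hwB₂ k _ _ (hSB k)).trans_eq (by ring)
  calc finMag F ≤ ∑ q ∈ grid SA ∪ grid SB, w q :=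
        finMag_le_sum_of_isWeighting (simForm_nonneg _) hFG hw
    _ ≤ _ := by rw [hsum]; linarith

lemma exists_finMag_eq_of_subset_cube_union (hN : 0 < N) (hr : 0 < r)
    (hcd : ∀ k, c k + 2 * r < d k) {m : ℕ} (hm : 0 < m) :
    ∃ F : Finset (L1 N), ↑F ⊆ cube c r ∪ cube d r ∧
      finMag F = 2 * (1 + m * tanhHalf (2 * r / m)) ^ N -
        bridgeLoss (dist c d - 2 * N * r) := by
  have hg : 0 < 2 * r / m := by positivity
  have hlen : (m : ℝ) * (2 * r / m) = 2 * r := by field_simp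
  have hIcc : ∀ lo, ∀ x ∈ arithProg (lo - r) (2 * r / m) m, x ∈ Icc (lo - r) (lo + r) := by
    intro lo x hx
    have := arithProg_subset_Icc hg.le x hx
    rwa [hlen, sub_add_eq_add_sub, add_sub_assoc, two_mul, add_sub_cancel_right] at this
  have hend : ∀ lo, lo + r ∈ arithProg (lo - r) (2 * r / m) m :=
    fun lo => mem_arithProg.2 ⟨m, le_rfl, by linarith⟩
  have hstart : ∀ lo, lo - r ∈ arithProg (lo - r) (2 * r / m) m :=
    fun lo => mem_arithProg.2 ⟨0, Nat.zero_le m, by simp⟩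
  choose wg hwg hwsum using fun lo => exists_isWeighting_arithProg (lo - r) hg m
  obtain ⟨w, hw, hsum⟩ := exists_isWeighting_grid_union_grid hN hr.le hcd
    (fun k => hIcc (c k)) (fun k => hend (c k)) (fun k => hIcc (d k)) (fun k => hstart (d k))
    (fun k => hwg (c k)) (fun k => hwg (d k))
  refine ⟨(grid fun k => arithProg (c k - r) (2 * r / m) m) ∪
    grid fun k => arithProg (d k - r) (2 * r / m) m, ?_, ?_⟩
  · rw [Finset.coe_union]
    exact union_subset_union (grid_subset_cube fun k => hIcc (c k))
      (grid_subset_cube fun k => hIcc (d k))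
  simp only [finMag_eq_sum hw, hsum, hwsum, Finset.prod_const, Finset.card_univ, Fintype.card_fin]
  ring

lemma cMag_cube_union (hN : 0 < N) (hr : 0 < r) (hcd : ∀ k, c k + 2 * r < d k) :
    cMag (cube c r ∪ cube d r) = 2 * (1 + r) ^ N - bridgeLoss (dist c d - 2 * N * r) := by
  set C := bridgeLoss (dist c d - 2 * N * r)
  have hub : ∀ m ∈ {m : ℝ | ∃ F : Finset (L1 N), ↑F ⊆ cube c r ∪ cube d r ∧ m = finMag F},
      m ≤ 2 * (1 + r) ^ N - C := by
    rintro _ ⟨F, hF, rfl⟩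
    exact finMag_le_of_subset_cube_union hN hr.le hcd hF
  refine le_antisymm (csSup_le ⟨0, ∅, by simp, finMag_empty.symm⟩ hub) ?_
  have hlim : Tendsto (fun m : ℕ => 2 * (1 + m * tanhHalf (2 * r / m)) ^ N - C) atTop
      (𝓝 (2 * (1 + r) ^ N - C)) :=
    (((tendsto_const_nhds.add (tendsto_nat_mul_tanhHalf hr.le)).pow N).const_mul 2).sub_const C
  refine le_of_tendsto hlim ?_
  filter_upwards [eventually_gt_atTop 0] with m hm
  obtain ⟨F, hF, hFm⟩ := exists_finMag_eq_of_subset_cube_union hN hr hcd hm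
  exact le_csSup ⟨_, hub⟩ ⟨F, hF, hFm.symm⟩

end TwoCubes

lemma cMag_of_subsingleton {X : Type*} [MetricSpace X] [Subsingleton X] {K : Set X}
    (hK : K.Nonempty) : cMag K = 1 := by
  obtain ⟨x, hx⟩ := hK
  have hub : ∀ m ∈ {m : ℝ | ∃ F : Finset X, ↑F ⊆ K ∧ m = finMag F}, m ≤ 1 := by
    rintro _ ⟨F, -, rfl⟩
    obtain rfl | ⟨y, hy⟩ := F.eq_empty_or_nonempty
    · simp [finMag_empty]
    · rw [Finset.eq_singleton_iff_unique_mem.2 ⟨hy, fun z _ => Subsingleton.elim z y⟩,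
        finMag_singleton]
  exact le_antisymm (csSup_le ⟨1, {x}, by simpa, (finMag_singleton x).symm⟩ hub)
    (le_csSup ⟨1, hub⟩ ⟨{x}, by simpa, (finMag_singleton x).symm⟩)

section ZeroPair

variable {N : ℕ} {p : L1 N}

lemma cubes_pair (c d : L1 N) (r : ℝ) : cubes {c, d} r = cube c r ∪ cube d r := by
  simp [cubes]

lemma skewness_pair {x y : L1 N} (hxy : x ≠ y) :
    skewness (({x, y} : Finset (L1 N)) : Set (L1 N)) = ⨅ k, ENNReal.ofReal |x k - y k| := by
  refine le_antisymm (iInf_le_of_le ⟨x, by simp⟩ <| iInf_le_of_le ⟨y, by simp⟩ <|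
    iInf_le_of_le (fun h => hxy (congrArg Subtype.val h)) le_rfl) ?_
  refine le_iInf fun ⟨a, ha⟩ => le_iInf fun ⟨b, hb⟩ => le_iInf fun hab => le_iInf fun k =>
    iInf_le_of_le k (le_of_eq ?_)
  simp only [Finset.coe_insert, Finset.coe_singleton, mem_insert_iff, mem_singleton_iff] at ha hb
  rcases ha with rfl | rfl <;> rcases hb with rfl | rfl <;> simp_all [abs_sub_comm]

lemma skewness_zero_pair (hp : ∀ k, 0 < p k) :
    skewness (({0, p} : Finset (L1 N)) : Set (L1 N)) = ⨅ k, ENNReal.ofReal (p k) := by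
  rcases N.eq_zero_or_pos with rfl | hN
  · rw [iInf_of_empty, skewness]
    exact iInf_eq_top.2 fun a => iInf_eq_top.2 fun b => iInf_eq_top.2 fun hab =>
      absurd (Subsingleton.elim a b) hab
  · have h0p : (0 : L1 N) ≠ p := fun h => (hp ⟨0, hN⟩).ne (congrArg (· ⟨0, hN⟩) h)
    rw [skewness_pair h0p]
    simp [abs_of_pos (hp _)]

lemma isSkew_zero_pair (hp : ∀ k, 0 < p k) :
    IsSkew (({0, p} : Finset (L1 N)) : Set (L1 N)) := by
  rw [IsSkew, skewness_zero_pair hp]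
  cases isEmpty_or_nonempty (Fin N)
  · simp [iInf_of_empty]
  · obtain ⟨k, hk⟩ := exists_eq_ciInf_of_finite (f := fun k => ENNReal.ofReal (p k))
    exact hk ▸ ENNReal.ofReal_pos.2 (hp k)

lemma cMag_cubes_zero_pair {r : ℝ} (hr : 0 < r) (hpr : ∀ k, 2 * r < p k) :
    cMag (cubes ({0, p} : Finset (L1 N)) r) =
      2 * (1 + r) ^ N - bridgeLoss (∑ k, |p k| - 2 * N * r) := by
  rcases N.eq_zero_or_pos with rfl | hN
  · rw [cMag_of_subsingleton ⟨0, by simp [cubes_pair, cube]⟩, bridgeLoss]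
    norm_num
  · rw [cubes_pair, cMag_cube_union hN hr (fun k => by simpa using hpr k), L1.dist_zero_left]

end ZeroPair

theorem stmt16 {N : ℕ} (p : L1 N) (hp : ∀ k, 0 < p k) :
    -- `F = {0, p}` is skew with `skew F = min_k p_k`
    IsSkew (({0, p} : Finset (L1 N)) : Set (L1 N)) ∧
    (skewness (({0, p} : Finset (L1 N)) : Set (L1 N)) =
      ⨅ k : Fin N, ENNReal.ofReal (p k)) ∧
    -- the magnitude of the union of the two cubes, for `r ∈ (0, skew F / 2)`
    (∀ r : ℝ, 0 < r →
      ENNReal.ofReal (2 * r) < skewness (({0, p} : Finset (L1 N)) : Set (L1 N)) →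
      cMag (cubes ({0, p} : Finset (L1 N)) r) =
        2 * (1 + r) ^ N -
          2 * Real.exp (-((∑ k, |p k|) - 2 * N * r)) /
            (1 + Real.exp (-((∑ k, |p k|) - 2 * N * r)))) ∧
    -- the limit as `r ↘ 0`
    Tendsto (fun r : ℝ => cMag (cubes ({0, p} : Finset (L1 N)) r)) (𝓝[>] 0)
      (𝓝 (2 / (1 + Real.exp (-∑ k, |p k|)))) ∧
    finMag ({0, p} : Finset (L1 N)) = 2 / (1 + Real.exp (-∑ k, |p k|)) := by
  have hskew := skewness_zero_pair hp
  have hmag : ∀ r : ℝ, 0 < r →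
      ENNReal.ofReal (2 * r) < skewness (({0, p} : Finset (L1 N)) : Set (L1 N)) →
      cMag (cubes ({0, p} : Finset (L1 N)) r) =
        2 * (1 + r) ^ N - bridgeLoss (∑ k, |p k| - 2 * N * r) :=
    fun r hr h => cMag_cubes_zero_pair hr fun k =>
      (ENNReal.ofReal_lt_ofReal_iff (hp k)).1 ((hskew ▸ h).trans_le (iInf_le _ k))
  have hsmall : ∀ᶠ r in 𝓝[>] (0 : ℝ),
      ENNReal.ofReal (2 * r) < skewness (({0, p} : Finset (L1 N)) : Set (L1 N)) :=
    eventually_nhdsWithin_of_eventually_nhds <| (ENNReal.tendsto_ofReal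
      ((continuous_const_mul 2).tendsto' 0 0 (mul_zero 2))).eventually_lt_const
        (by rw [ENNReal.ofReal_zero]; exact isSkew_zero_pair hp)
  have hcont : Continuous fun r : ℝ => 2 * (1 + r) ^ N - bridgeLoss (∑ k, |p k| - 2 * N * r) :=
    (by fun_prop : Continuous fun r : ℝ => 2 * (1 + r) ^ N).sub
      (continuous_bridgeLoss.comp (by fun_prop))
  have hlim : Tendsto (fun r : ℝ => 2 * (1 + r) ^ N - bridgeLoss (∑ k, |p k| - 2 * N * r))
      (𝓝[>] 0) (𝓝 (2 / (1 + exp (-∑ k, |p k|)))) :=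
    (hcont.tendsto' 0 _ (by simp [two_sub_bridgeLoss])).mono_left nhdsWithin_le_nhds
  refine ⟨isSkew_zero_pair hp, hskew, hmag, hlim.congr' ?_, ?_⟩
  · filter_upwards [hsmall, self_mem_nhdsWithin] with r h hr using (hmag r hr h).symm
  · rw [finMag_pair, L1.dist_zero_left]
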